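/- arXiv:2509.09816 — 4 statements merged into one kernel-verified Lean document; each statement's English description precedes it below -/
import Mathlib

section
/- Safety of the optimality cut when the enforced distribution differs from the cut's distribution (Proposition 2, case d^i ≠ d^v). Let Z be a finite set, A' ⊆ Z, and y : Z → ℝ a binary vector (y(z) ∈ {0,1} for all z) that does NOT activate exactly A'. Let S' be a finite scenario set with weights π' : S' → ℝ, π'(s) ≥ 0 for all s. Let x : I → ℝ be a first-stage decision over a finite facility index set I; for each s ∈ S' let (m_s, n_s, W_s, q_s, h_s, T_s) be linear-programming data with b_s := h_s − T_s·x, assume the primal feasible set {w | w ≥ 0, W_s·w = b_s} is nonempty, set Q'(s) := inf { q_s ⬝ w : w primal feasible }, and let ρ'_s be dual feasible (W_sᵀ·ρ'_s ≤ q_s). Let μ ∈ ℝ and U ≥ 0 satisfy ∑_{s∈S'} π'(s)·Q'(s) − μ ≤ U. Then μ ≥ ∑_{s∈S'} π'(s)·(ρ'_s ⬝ b_s) − U·P(y,A'); that is, (x, y, μ) satisfies the optimality cut generated for the other distribution. -/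
open Matrix Finset

/-- **Safety of the optimality cut, different-distribution case (Proposition 2, `d^i ≠ d^v`).**
Let `y` be a binary zone vector that does *not* activate exactly `A'`.  If each `Q' s` is the
optimal value of a feasible second-stage LP with right-hand side `b s = h s - T s · x`, each
`ρ' s` is dual feasible, `U ≥ 0` and `∑ s, π' s * Q' s - μ ≤ U`, then `(x, y, μ)` satisfies
the optimality cut generated for the other distribution. -/
theorem optimality_cut_safe_other_distribution
    {S I Z : Type*} [Fintype S] [Fintype I] [Fintype Z] [DecidableEq Z]
    (A' : Finset Z) (y : Z → ℝ)
    (hybin : ∀ z, y z = 0 ∨ y z = 1)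
    (hyne : ¬ ((∀ z ∈ A', y z = 1) ∧ (∀ z ∉ A', y z = 0)))
    (π' : S → ℝ) (hπ' : ∀ s, 0 ≤ π' s)
    (x : I → ℝ)
    (m n : S → Type*) [∀ s, Fintype (m s)] [∀ s, Fintype (n s)]
    (W : (s : S) → Matrix (m s) (n s) ℝ) (q : (s : S) → n s → ℝ)
    (h : (s : S) → m s → ℝ) (T : (s : S) → Matrix (m s) I ℝ)
    (b : (s : S) → m s → ℝ) (hb : ∀ s, b s = h s - (T s).mulVec x)
    (hfeas : ∀ s, ∃ w : n s → ℝ, (∀ k, 0 ≤ w k) ∧ (W s).mulVec w = b s)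
    (Q' : S → ℝ)
    (hQ' : ∀ s, Q' s =
      sInf {v : ℝ | ∃ w : n s → ℝ, (∀ k, 0 ≤ w k) ∧ (W s).mulVec w = b s ∧ v = q s ⬝ᵥ w})
    (ρ' : (s : S) → m s → ℝ)
    (hρ' : ∀ s, ∀ k, (W s)ᵀ.mulVec (ρ' s) k ≤ q s k)
    (μ U : ℝ) (hU : 0 ≤ U)
    (hgap : ∑ s, π' s * Q' s - μ ≤ U) :
    μ ≥ ∑ s, π' s * (ρ' s ⬝ᵥ b s)
        - U * ((A'.card : ℝ) - ∑ z ∈ A', y z + ∑ z ∈ A'ᶜ, y z) := by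

  -- weak duality: ρ' s ⬝ b s ≤ Q' s
  have hdual : ∀ s, ρ' s ⬝ᵥ b s ≤ Q' s := by
    intro s
    rw [hQ' s]
    apply le_csInf
    · obtain ⟨w, hw⟩ := hfeas s
      exact ⟨q s ⬝ᵥ w, w, hw.1, hw.2, rfl⟩
    · rintro v ⟨w, hw0, hwb, rfl⟩
      calc ρ' s ⬝ᵥ b s = ρ' s ⬝ᵥ (W s).mulVec w := by rw [hwb]
        _ = (W s)ᵀ.mulVec (ρ' s) ⬝ᵥ w := by
            rw [Matrix.dotProduct_mulVec, Matrix.mulVec_transpose]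
        _ ≤ q s ⬝ᵥ w := by
            apply Finset.sum_le_sum
            intro k _
            exact mul_le_mul_of_nonneg_right (hρ' s k) (hw0 k)
  -- penalty ≥ 1
  have hP : (1 : ℝ) ≤ (A'.card : ℝ) - ∑ z ∈ A', y z + ∑ z ∈ A'ᶜ, y z := by
    push_neg at hyne
    have key : ∀ (B : Finset Z), (∀ z ∈ B, y z = 0 ∨ y z = 1) →
        0 ≤ (B.card : ℝ) - ∑ z ∈ B, y z := by
      intro B hB
      have : ∑ z ∈ B, y z ≤ ∑ z ∈ B, (1:ℝ) := by
        apply Finset.sum_le_sum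
        intro z hz
        rcases hB z hz with h' | h' <;> simp [h']
      simpa using this
    have hnn : 0 ≤ ∑ z ∈ A'ᶜ, y z := by
      apply Finset.sum_nonneg
      intro z _
      rcases hybin z with h' | h' <;> simp [h']
    by_cases hcase : ∀ z ∈ A', y z = 1
    · obtain ⟨z₀, hz₀, hyz₀⟩ := hyne hcase
      have hy1 : y z₀ = 1 := (hybin z₀).resolve_left hyz₀
      have hz₀c : z₀ ∈ A'ᶜ := Finset.mem_compl.mpr hz₀
      have h1 : (1:ℝ) ≤ ∑ z ∈ A'ᶜ, y z := by
        have := Finset.single_le_sum (f := y)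
          (fun z _ => by rcases hybin z with h' | h' <;> simp [h']) hz₀c
        linarith [this, hy1]
      have h2 : 0 ≤ (A'.card : ℝ) - ∑ z ∈ A', y z :=
        key A' (fun z _ => hybin z)
      linarith
    · push_neg at hcase
      obtain ⟨z₀, hz₀, hyz₀⟩ := hcase
      have hy0 : y z₀ = 0 := (hybin z₀).resolve_right hyz₀
      have h1 : (1:ℝ) ≤ (A'.card : ℝ) - ∑ z ∈ A', y z := by
        have : ∑ z ∈ A', y z ≤ ∑ z ∈ A', (if z = z₀ then (0:ℝ) else 1) := by
          apply Finset.sum_le_sum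
          intro z hz
          by_cases hzz : z = z₀
          · simp [hzz, hy0]
          · rcases hybin z with h' | h' <;> simp [hzz, h']
        have hsum : ∑ z ∈ A', (if z = z₀ then (0:ℝ) else 1)
            = (A'.card : ℝ) - 1 := by
          rw [← Finset.add_sum_erase _ _ hz₀]
          have he : ∑ z ∈ A'.erase z₀, (if z = z₀ then (0:ℝ) else 1)
              = ∑ z ∈ A'.erase z₀, (1:ℝ) := by
            apply Finset.sum_congr rfl
            intro z hz
            simp [Finset.ne_of_mem_erase hz]
          rw [he]
          simp [Finset.cast_card_erase_of_mem hz₀]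
        linarith [this, hsum.le, hsum.ge]
      linarith
  have hsum : ∑ s, π' s * (ρ' s ⬝ᵥ b s) ≤ ∑ s, π' s * Q' s :=
    Finset.sum_le_sum fun s _ => mul_le_mul_of_nonneg_left (hdual s) (hπ' s)
  have hUP : U ≤ U * ((A'.card : ℝ) - ∑ z ∈ A', y z + ∑ z ∈ A'ᶜ, y z) :=
    le_mul_of_one_le_right hU hP
  linarith
end

section
/- Correctness of the distribution-selection constraints in the extensive formulation. Let Z be a finite set, A ⊆ Z, y : Z → ℤ with y(z) ∈ {0,1} for all z ∈ Z, and δ ∈ ℤ with δ ∈ {0,1}. Write L := ∑_{z∈A} y(z) − ∑_{z∈Z\A} y(z). Then the pair of constraints L ≥ |A|·δ − |Z\A|·(1 − δ) and L ≤ δ + |A| − 1 holds if and only if (δ = 1 ↔ L = |A|). In other words, constraints (2d)–(2e) enforce that δ equals 1 exactly when exactly the zones in A (and no others) are active. -/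
open Finset

/-- **Correctness of the distribution-selection constraints (2d)–(2e).**
For binary zone indicators `y : Z → ℤ` and a binary variable `δ ∈ ℤ`, with
`L = ∑_{z∈A} y z - ∑_{z∈Z\A} y z`, the constraints
`L ≥ |A| * δ - |Z\A| * (1 - δ)` and `L ≤ δ + |A| - 1` hold if and only if
`δ = 1 ↔ L = |A|`, i.e. `δ` equals `1` exactly when exactly the zones in `A`
(and no others) are active. -/
theorem distribution_selection_constraints_correct
    {Z : Type*} [Fintype Z] [DecidableEq Z] (A : Finset Z) (y : Z → ℤ)
    (hy : ∀ z, y z = 0 ∨ y z = 1) (δ : ℤ) (hδ : δ = 0 ∨ δ = 1) :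
    (((A.card : ℤ) * δ - (Aᶜ.card : ℤ) * (1 - δ) ≤ ∑ z ∈ A, y z - ∑ z ∈ Aᶜ, y z) ∧
      (∑ z ∈ A, y z - ∑ z ∈ Aᶜ, y z ≤ δ + (A.card : ℤ) - 1)) ↔
      (δ = 1 ↔ ∑ z ∈ A, y z - ∑ z ∈ Aᶜ, y z = (A.card : ℤ)) := by
  have hA : ∑ z ∈ A, y z ≤ (A.card : ℤ) := by
    calc ∑ z ∈ A, y z ≤ ∑ _z ∈ A, (1 : ℤ) :=
      Finset.sum_le_sum fun z _ => by rcases hy z with h | h <;> simp [h]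
    _ = (A.card : ℤ) := by simp
  have hAc : (0 : ℤ) ≤ ∑ z ∈ Aᶜ, y z :=
    Finset.sum_nonneg fun z _ => by rcases hy z with h | h <;> simp [h]
  have hAnc : -((Aᶜ.card : ℤ)) ≤ -∑ z ∈ Aᶜ, y z := by
    have : ∑ z ∈ Aᶜ, y z ≤ (Aᶜ.card : ℤ) := by
      calc ∑ z ∈ Aᶜ, y z ≤ ∑ _z ∈ Aᶜ, (1 : ℤ) :=
        Finset.sum_le_sum fun z _ => by rcases hy z with h | h <;> simp [h]
      _ = (Aᶜ.card : ℤ) := by simp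
    linarith
  have hAn : (0 : ℤ) ≤ ∑ z ∈ A, y z :=
    Finset.sum_nonneg fun z _ => by rcases hy z with h | h <;> simp [h]
  rcases hδ with h | h <;> subst h <;>
    constructor <;> intro hc
  · constructor
    · intro h; exact absurd h (by norm_num)
    · intro h; linarith [hc.2]
  · refine ⟨by linarith, ?_⟩
    have : ¬ (∑ z ∈ A, y z - ∑ z ∈ Aᶜ, y z = (A.card : ℤ)) := by
      intro h; exact absurd (hc.mpr h) (by norm_num)
    have hle : ∑ z ∈ A, y z - ∑ z ∈ Aᶜ, y z ≤ (A.card : ℤ) := by linarith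
    omega
  · constructor
    · intro _; linarith [hc.1, hc.2]
    · intro _; rfl
  · have := hc.mp rfl
    constructor <;> linarith
end

section
/- Jensen step for the second-stage value under a discrete demand distribution. Fix x : I → ℝ with C(i)·x(i) ≥ 0 for all i ∈ I and R(i,j) ≥ 0 for all i ∈ I, j ∈ J. Let S be a finite nonempty scenario set with weights π : S → ℝ satisfying π(s) ≥ 0 and ∑_{s∈S} π(s) = 1, and demand realizations ξ_s : J → ℝ with ξ_s(j) ≥ 0 for all s ∈ S, j ∈ J. Then ∑_{s∈S} π(s)·Q(x, ξ_s) ≤ Q(x, ∑_{s∈S} π(s)·ξ_s); that is, the expected second-stage value is at most the second-stage value at the expected demand. -/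
open Finset

/-- Second-stage feasible set `F(x,ξ)`: nonnegative flows respecting demands and capacities. -/
def Feas {I J : Type*} [Fintype I] [Fintype J]
    (C : I → ℝ) (x : I → ℝ) (ξ : J → ℝ) : Set (I × J → ℝ) :=
  {w | (∀ p, 0 ≤ w p) ∧ (∀ j, ∑ i, w (i, j) ≤ ξ j) ∧ (∀ i, ∑ j, w (i, j) ≤ C i * x i)}

/-- Revenue `f(w) = ∑_i ∑_j R(i,j) · w(i,j)` of a second-stage flow. -/
def revenue {I J : Type*} [Fintype I] [Fintype J]
    (R : I × J → ℝ) (w : I × J → ℝ) : ℝ :=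
  ∑ i, ∑ j, R (i, j) * w (i, j)

/-- Second-stage optimal value `Q(x,ξ) = sup { f(w) : w ∈ F(x,ξ) }`. -/
noncomputable def Qval {I J : Type*} [Fintype I] [Fintype J]
    (R : I × J → ℝ) (C : I → ℝ) (x : I → ℝ) (ξ : J → ℝ) : ℝ :=
  sSup (revenue R '' Feas C x ξ)

lemma zero_mem_feas {I J : Type*} [Fintype I] [Fintype J]
    (C : I → ℝ) (x : I → ℝ) (ξ : J → ℝ)
    (hCx : ∀ i, 0 ≤ C i * x i) (hξ : ∀ j, 0 ≤ ξ j) :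
    (fun _ => (0:ℝ)) ∈ Feas C x ξ := by
  refine ⟨fun p => le_refl 0, fun j => ?_, fun i => ?_⟩ <;> simp [hξ, hCx]

lemma bddAbove_rev {I J : Type*} [Fintype I] [Fintype J]
    (R : I × J → ℝ) (C : I → ℝ) (x : I → ℝ) (ξ : J → ℝ)
    (hR : ∀ i j, 0 ≤ R (i, j)) :
    BddAbove (revenue R '' Feas C x ξ) := by
  refine ⟨∑ i, ∑ j, R (i, j) * (C i * x i), ?_⟩
  rintro _ ⟨w, ⟨hw0, _, hwc⟩, rfl⟩
  unfold revenue
  refine Finset.sum_le_sum fun i _ => Finset.sum_le_sum fun j _ => ?_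
  refine mul_le_mul_of_nonneg_left ?_ (hR i j)
  calc w (i, j) ≤ ∑ j', w (i, j') :=
        Finset.single_le_sum (fun j' _ => hw0 (i, j')) (mem_univ j)
    _ ≤ C i * x i := hwc i

/-- **Jensen step for the second-stage value under a discrete demand distribution.**
For a finite nonempty scenario set with nonnegative probability weights summing to one
and nonnegative demand realizations, the expected second-stage value is at most the
second-stage value at the expected demand:
`∑_s π(s) Q(x,ξ_s) ≤ Q(x, ∑_s π(s) ξ_s)`. -/
theorem second_stage_value_jensen
    {I J S : Type*} [Fintype I] [Fintype J] [Fintype S] [Nonempty S]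
    (R : I × J → ℝ) (C : I → ℝ) (x : I → ℝ)
    (hCx : ∀ i, 0 ≤ C i * x i) (hR : ∀ i j, 0 ≤ R (i, j))
    (π : S → ℝ) (hπ : ∀ s, 0 ≤ π s) (hπ1 : ∑ s, π s = 1)
    (ξ : S → J → ℝ) (hξ : ∀ s j, 0 ≤ ξ s j) :
    ∑ s, π s * Qval R C x (ξ s) ≤ Qval R C x (fun j => ∑ s, π s * ξ s j) := by
  apply le_of_forall_pos_le_add
  intro ε hε
  have hne : ∀ s : S, (revenue R '' Feas C x (ξ s)).Nonempty := fun s =>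
    ⟨_, Set.mem_image_of_mem _ (zero_mem_feas C x (ξ s) hCx (hξ s))⟩
  have key : ∀ s : S, ∃ w ∈ Feas C x (ξ s), Qval R C x (ξ s) - ε < revenue R w := by
    intro s
    have h : Qval R C x (ξ s) - ε < sSup (revenue R '' Feas C x (ξ s)) := by
      unfold Qval; linarith
    obtain ⟨y, hy, hlt⟩ := exists_lt_of_lt_csSup (hne s) h
    obtain ⟨w, hw, rfl⟩ := hy
    exact ⟨w, hw, hlt⟩
  choose w hwF hwrev using key
  set wm : I × J → ℝ := fun p => ∑ s, π s * w s p with hwm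
  have hmem : wm ∈ Feas C x (fun j => ∑ s, π s * ξ s j) := by
    refine ⟨fun p => Finset.sum_nonneg fun s _ => mul_nonneg (hπ s) ((hwF s).1 p),
      fun j => ?_, fun i => ?_⟩
    · calc ∑ i, wm (i, j) = ∑ s, π s * ∑ i, w s (i, j) := by
            simp only [hwm, Finset.mul_sum]; rw [Finset.sum_comm]
        _ ≤ ∑ s, π s * ξ s j :=
            Finset.sum_le_sum fun s _ => mul_le_mul_of_nonneg_left ((hwF s).2.1 j) (hπ s)
    · calc ∑ j, wm (i, j) = ∑ s, π s * ∑ j, w s (i, j) := by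
            simp only [hwm, Finset.mul_sum]; rw [Finset.sum_comm]
        _ ≤ ∑ s, π s * (C i * x i) :=
            Finset.sum_le_sum fun s _ => mul_le_mul_of_nonneg_left ((hwF s).2.2 i) (hπ s)
        _ = C i * x i := by rw [← Finset.sum_mul, hπ1, one_mul]
  have hrow : ∀ i, ∑ j, R (i, j) * wm (i, j) = ∑ s, π s * ∑ j, R (i, j) * w s (i, j) := by
    intro i
    simp only [hwm, Finset.mul_sum]
    rw [Finset.sum_comm]
    exact Finset.sum_congr rfl fun s _ => Finset.sum_congr rfl fun j _ => by ring
  have hrev : revenue R wm = ∑ s, π s * revenue R (w s) := by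
    unfold revenue
    simp only [hrow]
    rw [Finset.sum_comm]
    simp [Finset.mul_sum]
  have hle : revenue R wm ≤ Qval R C x (fun j => ∑ s, π s * ξ s j) :=
    le_csSup (bddAbove_rev R C x _ hR) (Set.mem_image_of_mem _ hmem)
  calc ∑ s, π s * Qval R C x (ξ s)
      ≤ ∑ s, π s * (revenue R (w s) + ε) :=
        Finset.sum_le_sum fun s _ =>
          mul_le_mul_of_nonneg_left (by linarith [hwrev s]) (hπ s)
    _ = revenue R wm + ε := by
        simp only [mul_add, Finset.sum_add_distrib, ← Finset.sum_mul, hπ1, one_mul, hrev]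
    _ ≤ Qval R C x (fun j => ∑ s, π s * ξ s j) + ε := by linarith
end

section
/- Validity of the problem-specific inequality (Proposition 4). Let x : I → ℝ be binary (x(i) ∈ {0,1} for all i ∈ I), with R(i,j) ≥ 0 for all i ∈ I, j ∈ J and C(i) ≥ 0 for all i ∈ I. Let D be a finite nonempty set of distributions; for each d ∈ D let S_d be a finite nonempty scenario set with weights π_d : S_d → ℝ satisfying π_d(s) ≥ 0 and ∑_{s∈S_d} π_d(s) = 1, and demand realizations ξ_{s,d} : J → ℝ with ξ_{s,d}(j) ≥ 0 for all s, j. Define the worst-case mean demand m̄(j) := max_{d∈D} ∑_{s∈S_d} π_d(s)·ξ_{s,d}(j). Then for every d ∈ D, ∑_{s∈S_d} π_d(s)·Q(x, ξ_{s,d}) ≤ ∑_{i∈I}∑_{j∈J} R(i,j)·min(C(i), m̄(j))·x(i). In particular the inequality μ ≤ ∑_{i,j} R(i,j)·min(C(i), m̄(j))·x(i) is valid for the relaxed master problem: it holds for μ equal to the expected second-stage value under the distribution enforced by x. -/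
open Finset

/-- **Validity of the problem-specific inequality (Proposition 4).**
For a binary location decision `x`, nonnegative revenues and capacities, finitely many
distributions each given by a finite nonempty scenario set with nonnegative weights
summing to one and nonnegative demand realizations, and the worst-case mean demand
`m̄(j) = max_d ∑_s π_d(s) ξ_{s,d}(j)`, the expected second-stage value under every
distribution `d` is at most `∑_i ∑_j R(i,j) min(C(i), m̄(j)) x(i)`; hence the inequality
`μ ≤ ∑_{i,j} R(i,j) min(C(i), m̄(j)) x(i)` is valid for the relaxed master problem. -/
theorem valid_inequality_rmp
    {I J D : Type*} [Fintype I] [Fintype J] [Fintype D] [Nonempty D]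
    (R : I × J → ℝ) (C : I → ℝ) (x : I → ℝ)
    (hx : ∀ i, x i = 0 ∨ x i = 1)
    (hR : ∀ i j, 0 ≤ R (i, j)) (hC : ∀ i, 0 ≤ C i)
    (S : D → Type*) [∀ d, Fintype (S d)] [∀ d, Nonempty (S d)]
    (π : (d : D) → S d → ℝ) (hπ : ∀ d s, 0 ≤ π d s) (hπ1 : ∀ d, ∑ s, π d s = 1)
    (ξ : (d : D) → S d → J → ℝ) (hξ : ∀ d s j, 0 ≤ ξ d s j)
    (mbar : J → ℝ)
    (hmbar : ∀ j, mbar j = Finset.univ.sup' Finset.univ_nonempty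
      (fun d => ∑ s, π d s * ξ d s j)) :
    ∀ d, ∑ s, π d s * Qval R C x (ξ d s) ≤
      ∑ i, ∑ j, R (i, j) * min (C i) (mbar j) * x i := by
  intro d
  have hxnn : ∀ i, 0 ≤ x i := fun i => by rcases hx i with h | h <;> simp [h]
  have hCx : ∀ i, 0 ≤ C i * x i := fun i => mul_nonneg (hC i) (hxnn i)
  have hmnn : ∀ j, 0 ≤ mbar j := by
    intro j
    rw [hmbar j]
    obtain ⟨d0⟩ := (inferInstance : Nonempty D)
    exact le_trans (Finset.sum_nonneg fun s _ =>
      mul_nonneg (hπ d0 s) (hξ d0 s j))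
      (Finset.le_sup' (fun d => ∑ s, π d s * ξ d s j) (mem_univ d0))
  -- bound on Qval
  have hQ : ∀ s : S d, Qval R C x (ξ d s) ≤
      ∑ i, ∑ j, R (i, j) * min (C i * x i) (ξ d s j) := by
    intro s
    apply Real.sSup_le
    · rintro y ⟨w, ⟨hw0, hwj, hwi⟩, rfl⟩
      unfold revenue
      gcongr with i _ j _
      · exact hR i j
      apply le_min
      · calc w (i, j) ≤ ∑ j', w (i, j') :=
              Finset.single_le_sum (fun j' _ => hw0 (i, j')) (mem_univ j)
          _ ≤ C i * x i := hwi i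
      · calc w (i, j) ≤ ∑ i', w (i', j) :=
              Finset.single_le_sum (fun i' _ => hw0 (i', j)) (mem_univ i)
          _ ≤ ξ d s j := hwj j
    · exact Finset.sum_nonneg fun i _ => Finset.sum_nonneg fun j _ =>
        mul_nonneg (hR i j) (le_min (hCx i) (hξ d s j))
  calc ∑ s, π d s * Qval R C x (ξ d s)
      ≤ ∑ s, π d s * ∑ i, ∑ j, R (i, j) * min (C i * x i) (ξ d s j) := by
        exact Finset.sum_le_sum fun s _ =>
          mul_le_mul_of_nonneg_left (hQ s) (hπ d s)
    _ = ∑ i, ∑ j, R (i, j) * ∑ s, π d s * min (C i * x i) (ξ d s j) := by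
        simp only [Finset.mul_sum]
        rw [Finset.sum_comm]
        refine Finset.sum_congr rfl fun i _ => ?_
        rw [Finset.sum_comm]
        refine Finset.sum_congr rfl fun j _ => ?_
        exact Finset.sum_congr rfl fun s _ => by ring
    _ ≤ ∑ i, ∑ j, R (i, j) * min (C i) (mbar j) * x i := by
        refine Finset.sum_le_sum fun i _ => Finset.sum_le_sum fun j _ => ?_
        have key : ∑ s, π d s * min (C i * x i) (ξ d s j) ≤
            min (C i) (mbar j) * x i := by
          have h1 : ∑ s, π d s * min (C i * x i) (ξ d s j) ≤ C i * x i := by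
            calc ∑ s, π d s * min (C i * x i) (ξ d s j)
                ≤ ∑ s, π d s * (C i * x i) :=
                  Finset.sum_le_sum fun s _ =>
                    mul_le_mul_of_nonneg_left (min_le_left _ _) (hπ d s)
              _ = C i * x i := by rw [← Finset.sum_mul, hπ1 d, one_mul]
          have h2 : ∑ s, π d s * min (C i * x i) (ξ d s j) ≤ mbar j * x i := by
            rcases hx i with h | h
            · simp only [h, mul_zero]
              exact le_of_eq (Finset.sum_eq_zero fun s _ => by
                simp [min_eq_left (hξ d s j)])
            · simp only [h, mul_one]
              calc ∑ s, π d s * min (C i) (ξ d s j)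
                  ≤ ∑ s, π d s * ξ d s j :=
                    Finset.sum_le_sum fun s _ =>
                      mul_le_mul_of_nonneg_left (min_le_right _ _) (hπ d s)
                _ ≤ mbar j := by
                    rw [hmbar j]
                    exact Finset.le_sup' (fun d => ∑ s, π d s * ξ d s j) (mem_univ d)
          rcases le_total (C i) (mbar j) with h | h
          · rw [min_eq_left h]; exact h1
          · rw [min_eq_right h]; exact h2
        rw [mul_assoc]
        exact mul_le_mul_of_nonneg_left key (hR i j)
end
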